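/- arXiv:2504.04933 — 2 statements merged into one kernel-verified Lean document; each statement's English description precedes it below -/
import Mathlib

section
/- Fix real constants m₀ > 0, ω > 0, ħ > 0, a > -1, γ > 1/2 and set λ₀ = √(m₀ω/ħ). Define for x ≠ 0: (X̃f)(x) = √m₀·λ₀^a·|x|^a·x·f(x) and the deformed parabose momentum operator (P̃f)(x) = -iħ·(λ₀^a√m₀)⁻¹·( |x|^{-a}·f'(x) - (a/2)·|x|^{-a-2}·x·f(x) - (γ-1/2)·|x|^{-a}·x⁻¹·f(-x) ). Then for every f : ℝ → ℂ differentiable on ℝ \ {0} and every x ≠ 0: P̃(X̃f)(x) - X̃(P̃f)(x) = -iħ·( (1+a)·f(x) + (2γ-1)·f(-x) ). -/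
/-! X̃ is multiplication by the odd function `c |x|^a x` with `c = √m₀ λ₀^a`, whose derivative
is `c (1 + a) |x|^a`. In the commutator the `f'` terms cancel by the Leibniz rule and the
multiplicative `a/2` terms cancel outright; differentiating the multiplier leaves `(1 + a) f(x)`,
and its oddness turns the two reflection terms into `(2γ - 1) f(-x)`. -/

/-- The deformed position operator `(X̃f)(x) = √m₀·λ₀^a·|x|^a·x·f(x)`. -/
noncomputable def Xop (m₀ lam a : ℝ) (f : ℝ → ℂ) (x : ℝ) : ℂ :=
  ((Real.sqrt m₀ * lam ^ a * |x| ^ a * x : ℝ) : ℂ) * f x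

/-- The deformed parabose momentum operator
`(P̃f)(x) = -iħ·(λ₀^a√m₀)⁻¹·(|x|^(-a)·f'(x) - (a/2)·|x|^(-a-2)·x·f(x)
  - (γ-1/2)·|x|^(-a)·x⁻¹·f(-x))`. -/
noncomputable def Ppb (hbar m₀ lam a γ : ℝ) (f : ℝ → ℂ) (x : ℝ) : ℂ :=
  (-Complex.I) * (hbar : ℂ) * (((lam ^ a * Real.sqrt m₀ : ℝ) : ℂ))⁻¹ *
    (((|x| ^ (-a) : ℝ) : ℂ) * deriv f x
      - ((a / 2 : ℝ) : ℂ) * ((|x| ^ (-a - 2) : ℝ) : ℂ) * (x : ℂ) * f x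
      - ((γ - 1 / 2 : ℝ) : ℂ) * ((|x| ^ (-a) : ℝ) : ℂ) * (x : ℂ)⁻¹ * f (-x))

theorem hasDerivAt_abs_rpow_mul_self (a : ℝ) {x : ℝ} (hx : x ≠ 0) :
    HasDerivAt (fun y : ℝ => |y| ^ a * y) ((a + 1) * |x| ^ a) x := by
  refine (((Real.hasDerivAt_rpow_const (p := a) (Or.inl (abs_ne_zero.2 hx))).comp x
    (hasDerivAt_abs hx)).mul (hasDerivAt_id x)).congr_deriv ?_
  rw [id_eq, mul_one, mul_assoc, sign_mul_self, Real.rpow_sub_one (abs_ne_zero.2 hx),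
    mul_assoc, div_mul_cancel₀ _ (abs_ne_zero.2 hx), Function.comp_apply]
  ring

theorem hasDerivAt_Xop (m₀ lam a : ℝ) {f : ℝ → ℂ} {x : ℝ} (hx : x ≠ 0)
    (hf : DifferentiableAt ℝ f x) :
    HasDerivAt (Xop m₀ lam a f)
      (((Real.sqrt m₀ * lam ^ a * (a + 1) * |x| ^ a : ℝ) : ℂ) * f x
        + ((Real.sqrt m₀ * lam ^ a * |x| ^ a * x : ℝ) : ℂ) * deriv f x) x := by
  have hmul := ((hasDerivAt_abs_rpow_mul_self a hx).const_mul (Real.sqrt m₀ * lam ^ a)).ofReal_comp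
  simp only [← mul_assoc] at hmul
  exact hmul.mul hf.hasDerivAt

theorem Ppb_Xop_sub_Xop_Ppb (hbar m₀ lam a γ : ℝ) (hc : Real.sqrt m₀ * lam ^ a ≠ 0)
    {f : ℝ → ℂ} {x : ℝ} (hx : x ≠ 0) (hf : DifferentiableAt ℝ f x) :
    Ppb hbar m₀ lam a γ (Xop m₀ lam a f) x - Xop m₀ lam a (Ppb hbar m₀ lam a γ f) x
      = (-Complex.I) * (hbar : ℂ) *
          (((1 + a : ℝ) : ℂ) * f x + ((2 * γ - 1 : ℝ) : ℂ) * f (-x)) := by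
  have hxa : |x| ^ a ≠ 0 := (Real.rpow_pos_of_pos (abs_pos.2 hx) a).ne'
  have hneg : |x| ^ (-a) = (|x| ^ a)⁻¹ := Real.rpow_neg (abs_nonneg x) a
  have hneg2 : |x| ^ (-a - 2) = (|x| ^ a)⁻¹ / x ^ 2 := by
    rw [show (2 : ℝ) = ((2 : ℕ) : ℝ) by norm_num, Real.rpow_sub_natCast (abs_ne_zero.2 hx),
      hneg, sq_abs]
  simp only [Ppb, Xop, (hasDerivAt_Xop m₀ lam a hx hf).deriv, abs_neg, hneg, hneg2]
  rw [mul_comm (lam ^ a)]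
  generalize Real.sqrt m₀ * lam ^ a = c at hc ⊢
  have hc' : (c : ℂ) ≠ 0 := by exact_mod_cast hc
  have hxa' : ((|x| ^ a : ℝ) : ℂ) ≠ 0 := by exact_mod_cast hxa
  have hx' : (x : ℂ) ≠ 0 := by exact_mod_cast hx
  push_cast
  field_simp
  ring

theorem stmt11_general (m₀ ω hbar a γ : ℝ) (hm₀ : 0 < m₀) (hω : 0 < ω) (hhb : 0 < hbar)
    (lam : ℝ) (hlam : lam = Real.sqrt (m₀ * ω / hbar))
    (f : ℝ → ℂ) (hf : ∀ y : ℝ, y ≠ 0 → DifferentiableAt ℝ f y)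
    (x : ℝ) (hx : x ≠ 0) :
    Ppb hbar m₀ lam a γ (Xop m₀ lam a f) x - Xop m₀ lam a (Ppb hbar m₀ lam a γ f) x
      = (-Complex.I) * (hbar : ℂ) *
          (((1 + a : ℝ) : ℂ) * f x + ((2 * γ - 1 : ℝ) : ℂ) * f (-x)) := by
  have hlam_pos : 0 < lam := hlam ▸ Real.sqrt_pos.2 (by positivity)
  exact Ppb_Xop_sub_Xop_Ppb hbar m₀ lam a γ
    (mul_pos (Real.sqrt_pos.2 hm₀) (Real.rpow_pos_of_pos hlam_pos a)).ne' hx (hf x hx)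

/-- the deformed parabose commutation relation
`P̃(X̃f)(x) - X̃(P̃f)(x) = -iħ·((1+a)·f(x) + (2γ-1)·f(-x))` at every `x ≠ 0`. -/
theorem stmt11 (m₀ ω hbar a γ : ℝ) (hm₀ : 0 < m₀) (hω : 0 < ω) (hhb : 0 < hbar)
    (ha : -1 < a) (hγ : 1 / 2 < γ)
    (lam : ℝ) (hlam : lam = Real.sqrt (m₀ * ω / hbar))
    (f : ℝ → ℂ) (hf : ∀ y : ℝ, y ≠ 0 → DifferentiableAt ℝ f y)
    (x : ℝ) (hx : x ≠ 0) :
    Ppb hbar m₀ lam a γ (Xop m₀ lam a f) x - Xop m₀ lam a (Ppb hbar m₀ lam a γ f) x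
      = (-Complex.I) * (hbar : ℂ) *
          (((1 + a : ℝ) : ℂ) * f x + ((2 * γ - 1 : ℝ) : ℂ) * f (-x)) :=
  stmt11_general m₀ ω hbar a γ hm₀ hω hhb lam hlam f hf x hx
end

section
/- Fix real constants m₀ > 0, ħ > 0, λ₀ > 0, a > -1, γ > 1/2, and define for x ≠ 0 the deformed parabose momentum operator (P̃f)(x) = -iħ·(λ₀^a√m₀)⁻¹·( |x|^{-a}·f'(x) - (a/2)·|x|^{-a-2}·x·f(x) - (γ-1/2)·|x|^{-a}·x⁻¹·f(-x) ). Then for every f : ℝ → ℂ twice differentiable on ℝ \ {0} and every x ≠ 0: P̃(P̃f)(x) = -(ħ²/m₀)·λ₀^{-2a}·|x|^{-2a}·( f''(x) - (2a/x)·f'(x) + ( a(3a+2)/4 - (γ-1/2)² )·x⁻²·f(x) + (a+1)·(γ-1/2)·x⁻²·f(-x) ). -/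
/-! With `ν = γ - 1/2`, the identity `|x|^(-a-2)·x = |x|^(-a)/x` factors the momentum operator as
`P̃ = κ·D` with `κ = -iħ/(λ₀^a√m₀)` and `(Df)(x) = |x|^(-a)·(f'(x) - (a/2)x⁻¹f(x) - νx⁻¹f(-x))`.
Since `D` commutes with constants, `P̃² = κ²D²` with `κ² = -(ħ²/m₀)λ₀^(-2a)`, and `D²f` is a direct
computation in which the `f'(-x)` terms, coming from differentiating `f(-x)` and from `(Df)(-x)`,
cancel. -/

theorem hasDerivAt_abs_rpow_of_ne_zero (c : ℝ) {x : ℝ} (hx : x ≠ 0) :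
    HasDerivAt (fun y : ℝ => |y| ^ c) (c * |x| ^ c / x) x := by
  convert (hasDerivAt_abs hx).rpow_const (p := c) (Or.inl (abs_ne_zero.2 hx)) using 1
  rw [Real.rpow_sub (abs_pos.2 hx), Real.rpow_one]
  rcases hx.lt_or_gt with h | h
  · simp only [abs_of_neg h, sign_neg h, SignType.coe_neg_one]
    field_simp
  · simp only [abs_of_pos h, sign_pos h, SignType.coe_one]
    field_simp

theorem abs_rpow_sub_two_mul (a x : ℝ) : |x| ^ (-a - 2) * x = |x| ^ (-a) / x := by
  rcases eq_or_ne x 0 with rfl | hx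
  · simp
  rw [Real.rpow_sub (abs_pos.2 hx), Real.rpow_two, sq_abs]
  field_simp

theorem abs_rpow_neg_two_mul (a x : ℝ) : |x| ^ (-(2 * a)) = (|x| ^ (-a)) ^ 2 := by
  rw [← Real.rpow_natCast, ← Real.rpow_mul (abs_nonneg x)]
  ring_nf

theorem HasDerivAt.div_ofReal_mul {g : ℝ → ℂ} {g' : ℂ} {x : ℝ} (c : ℂ) (hg : HasDerivAt g g' x)
    (hx : x ≠ 0) :
    HasDerivAt (fun y : ℝ => c / y * g y) (c / x * g' - c / x ^ 2 * g x) x := by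
  have hxC : (x : ℂ) ≠ 0 := Complex.ofReal_ne_zero.2 hx
  have hinv : HasDerivAt (fun y : ℝ => c / y) (-(c / x ^ 2)) x := by
    simpa [div_eq_mul_inv] using ((hasDerivAt_inv hxC).comp_ofReal).const_mul c
  exact (hinv.mul hg).congr_deriv (by ring)

noncomputable def reducedMomentum (a ν : ℝ) (f : ℝ → ℂ) (x : ℝ) : ℂ :=
  ((|x| ^ (-a) : ℝ) : ℂ) * (deriv f x - ((a / 2 : ℝ) : ℂ) / x * f x - (ν : ℂ) / x * f (-x))

noncomputable def momentumPrefactor (hbar m₀ lam a : ℝ) : ℂ :=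
  (-Complex.I) * hbar * ((lam ^ a * Real.sqrt m₀ : ℝ) : ℂ)⁻¹

theorem Ppb_eq_mul_reducedMomentum (hbar m₀ lam a γ : ℝ) (f : ℝ → ℂ) :
    Ppb hbar m₀ lam a γ f =
      fun x => momentumPrefactor hbar m₀ lam a * reducedMomentum a (γ - 1 / 2) f x := by
  ext x
  have h := congrArg (fun r : ℝ => (r : ℂ)) (abs_rpow_sub_two_mul a x)
  push_cast at h
  simp only [Ppb, momentumPrefactor, reducedMomentum, mul_assoc, h]
  ring

theorem momentumPrefactor_sq (hbar m₀ lam a : ℝ) (hm₀ : 0 ≤ m₀) (hlam : 0 ≤ lam) :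
    momentumPrefactor hbar m₀ lam a ^ 2
      = -((hbar ^ 2 / m₀ : ℝ) : ℂ) * ((lam ^ (-(2 * a)) : ℝ) : ℂ) := by
  have hlam2 : lam ^ (-(2 * a)) = ((lam ^ a) ^ 2)⁻¹ := by
    rw [Real.rpow_neg hlam, ← Real.rpow_natCast, ← Real.rpow_mul hlam]
    ring_nf
  have hsqrt : ((Real.sqrt m₀ : ℝ) : ℂ) ^ 2 = m₀ := by exact_mod_cast Real.sq_sqrt hm₀
  rw [momentumPrefactor, hlam2]
  push_cast
  simp only [mul_pow, inv_pow, neg_sq, Complex.I_sq, hsqrt]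
  ring

theorem reducedMomentum_const_mul (a ν : ℝ) (c : ℂ) (f : ℝ → ℂ) :
    reducedMomentum a ν (fun x => c * f x) = fun x => c * reducedMomentum a ν f x := by
  ext x
  simp only [reducedMomentum, deriv_const_mul_field']
  ring

theorem hasDerivAt_reducedMomentum (a ν : ℝ) {f : ℝ → ℂ} {x : ℝ} (hx : x ≠ 0)
    (hf : DifferentiableAt ℝ f x) (hfn : DifferentiableAt ℝ f (-x))
    (hf' : DifferentiableAt ℝ (deriv f) x) :
    HasDerivAt (reducedMomentum a ν f)
      (((-a * |x| ^ (-a) / x : ℝ) : ℂ)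
          * (deriv f x - ((a / 2 : ℝ) : ℂ) / x * f x - (ν : ℂ) / x * f (-x))
        + ((|x| ^ (-a) : ℝ) : ℂ)
          * (deriv (deriv f) x
            - (((a / 2 : ℝ) : ℂ) / x * deriv f x - ((a / 2 : ℝ) : ℂ) / x ^ 2 * f x)
            - ((ν : ℂ) / x * -deriv f (-x) - (ν : ℂ) / x ^ 2 * f (-x)))) x := by
  have hfneg : HasDerivAt (fun y => f (-y)) (-deriv f (-x)) x := by
    simpa only [deriv_comp_neg] using (differentiableAt_comp_neg.2 hfn).hasDerivAt
  exact (hasDerivAt_abs_rpow_of_ne_zero (-a) hx).ofReal_comp.mul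
    ((hf'.hasDerivAt.sub (hf.hasDerivAt.div_ofReal_mul _ hx)).sub (hfneg.div_ofReal_mul _ hx))

theorem reducedMomentum_reducedMomentum (a ν : ℝ) {f : ℝ → ℂ} {x : ℝ} (hx : x ≠ 0)
    (hf : DifferentiableAt ℝ f x) (hfn : DifferentiableAt ℝ f (-x))
    (hf' : DifferentiableAt ℝ (deriv f) x) :
    reducedMomentum a ν (reducedMomentum a ν f) x
      = ((|x| ^ (-(2 * a)) : ℝ) : ℂ) *
          (deriv (deriv f) x - ((2 * a : ℝ) : ℂ) / (x : ℂ) * deriv f x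
            + ((a * (3 * a + 2) / 4 - ν ^ 2 : ℝ) : ℂ) * ((x : ℂ) ^ 2)⁻¹ * f x
            + (((a + 1) * ν : ℝ) : ℂ) * ((x : ℂ) ^ 2)⁻¹ * f (-x)) := by
  have hxC : (x : ℂ) ≠ 0 := Complex.ofReal_ne_zero.2 hx
  rw [reducedMomentum, (hasDerivAt_reducedMomentum a ν hx hf hfn hf').deriv,
    abs_rpow_neg_two_mul]
  simp only [reducedMomentum, abs_neg, neg_neg]
  push_cast
  field_simp
  ring

theorem stmt14_general (m₀ hbar lam a γ : ℝ) (hm₀ : 0 < m₀) (hlam : 0 < lam)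
    (f : ℝ → ℂ)
    (hf : ∀ y : ℝ, y ≠ 0 → DifferentiableAt ℝ f y)
    (hf' : ∀ y : ℝ, y ≠ 0 → DifferentiableAt ℝ (deriv f) y)
    (x : ℝ) (hx : x ≠ 0) :
    Ppb hbar m₀ lam a γ (Ppb hbar m₀ lam a γ f) x
      = -((hbar ^ 2 / m₀ : ℝ) : ℂ) * ((lam ^ (-(2 * a)) : ℝ) : ℂ)
          * ((|x| ^ (-(2 * a)) : ℝ) : ℂ) *
          (deriv (deriv f) x - ((2 * a : ℝ) : ℂ) / (x : ℂ) * deriv f x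
            + ((a * (3 * a + 2) / 4 - (γ - 1 / 2) ^ 2 : ℝ) : ℂ) * ((x : ℂ) ^ 2)⁻¹ * f x
            + (((a + 1) * (γ - 1 / 2) : ℝ) : ℂ) * ((x : ℂ) ^ 2)⁻¹ * f (-x)) := by
  simp only [Ppb_eq_mul_reducedMomentum, reducedMomentum_const_mul]
  rw [reducedMomentum_reducedMomentum _ _ hx (hf x hx) (hf (-x) (neg_ne_zero.2 hx)) (hf' x hx),
    ← mul_assoc, ← sq, momentumPrefactor_sq hbar m₀ lam a hm₀.le hlam.le]
  ring

/-- expansion of the squared parabose momentum operator: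
`P̃(P̃f)(x) = -(ħ²/m₀)·λ₀^(-2a)·|x|^(-2a)·( f''(x) - (2a/x)·f'(x)
  + (a(3a+2)/4 - (γ-1/2)²)·x⁻²·f(x) + (a+1)(γ-1/2)·x⁻²·f(-x) )` at every `x ≠ 0`. -/
theorem stmt14 (m₀ hbar lam a γ : ℝ) (hm₀ : 0 < m₀) (hhb : 0 < hbar) (hlam : 0 < lam)
    (ha : -1 < a) (hγ : 1 / 2 < γ)
    (f : ℝ → ℂ)
    (hf : ∀ y : ℝ, y ≠ 0 → DifferentiableAt ℝ f y)
    (hf' : ∀ y : ℝ, y ≠ 0 → DifferentiableAt ℝ (deriv f) y)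
    (x : ℝ) (hx : x ≠ 0) :
    Ppb hbar m₀ lam a γ (Ppb hbar m₀ lam a γ f) x
      = -((hbar ^ 2 / m₀ : ℝ) : ℂ) * ((lam ^ (-(2 * a)) : ℝ) : ℂ)
          * ((|x| ^ (-(2 * a)) : ℝ) : ℂ) *
          (deriv (deriv f) x - ((2 * a : ℝ) : ℂ) / (x : ℂ) * deriv f x
            + ((a * (3 * a + 2) / 4 - (γ - 1 / 2) ^ 2 : ℝ) : ℂ) * ((x : ℂ) ^ 2)⁻¹ * f x
            + (((a + 1) * (γ - 1 / 2) : ℝ) : ℂ) * ((x : ℂ) ^ 2)⁻¹ * f (-x)) :=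
  stmt14_general m₀ hbar lam a γ hm₀ hlam f hf hf' x hx
end
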